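/- Let K ∈ ℝ^{n×n} be symmetric and suppose K = C·Vᵀ + E, where C ∈ ℝ^{n×k} has full column rank (so CᵀC is invertible), V ∈ ℝ^{n×k}, and E is an error matrix. Define U = Vᵀ·C·(Cᵀ·C)^{-1} ∈ ℝ^{k×k}. Then ‖K - C·U·Cᵀ‖ ≤ 2‖E‖, where ‖·‖ is the spectral norm. In particular, if additionally ‖E‖ ≤ p·σ_{k+1}(K) for some p ≥ 0, where σ_{k+1}(K) is the (k+1)-st largest singular value of K, then ‖K - C·U·Cᵀ‖ ≤ 2·p·σ_{k+1}(K). -/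

import Mathlib

/-! With `P = C (Cᴴ C)⁻¹ Cᴴ` the orthogonal projector onto the column space of `C`, the
approximation error factors as `K - C U Cᴴ = K - C Vᴴ P = K (1 - P) + E P`. Since `Cᴴ (1 - P) = 0`
and `K` is Hermitian, `K (1 - P) = (C Vᴴ + E)ᴴ (1 - P) = Eᴴ (1 - P)`. Both `P` and `1 - P` are star
projections, hence of norm at most one, which gives `‖K - C U Cᴴ‖ ≤ ‖Eᴴ‖ + ‖E‖ = 2 ‖E‖`. -/

open scoped Matrix.Norms.L2Operator
open Matrix

theorem Matrix.isHermitian_transpose_mul_self {m n α : Type*} [Fintype m] [NonUnitalSemiring α]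
    [StarRing α] [TrivialStar α] (A : Matrix m n α) : (Aᵀ * A).IsHermitian := by
  simpa [conjTranspose_eq_transpose_of_trivial] using isHermitian_conjTranspose_mul_self A

namespace Matrix

variable {m r 𝕜 : Type*} [Fintype m] [Fintype r] [DecidableEq r]

theorem isUnit_of_rank_eq_card {K : Type*} [Field K] {A : Matrix r r K}
    (h : A.rank = Fintype.card r) : IsUnit A := by
  rw [← mulVec_surjective_iff_isUnit, ← coe_mulVecLin, ← LinearMap.range_eq_top]
  exact Submodule.eq_top_of_finrank_eq (by simpa [Matrix.rank] using h)

variable [RCLike 𝕜]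

open scoped ComplexOrder in
theorem isUnit_conjTranspose_mul_self_of_rank_eq_card {C : Matrix m r 𝕜}
    (hC : C.rank = Fintype.card r) : IsUnit (Cᴴ * C) :=
  isUnit_of_rank_eq_card (by rw [rank_conjTranspose_mul_self, hC])

noncomputable def colSpaceProj (C : Matrix m r 𝕜) : Matrix m m 𝕜 := C * (Cᴴ * C)⁻¹ * Cᴴ

theorem isStarProjection_colSpaceProj {C : Matrix m r 𝕜} (hC : IsUnit (Cᴴ * C)) :
    IsStarProjection (colSpaceProj C) where
  isIdempotentElem := by
    rw [IsIdempotentElem, colSpaceProj]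
    calc C * (Cᴴ * C)⁻¹ * Cᴴ * (C * (Cᴴ * C)⁻¹ * Cᴴ)
        = C * ((Cᴴ * C)⁻¹ * (Cᴴ * C)) * (Cᴴ * C)⁻¹ * Cᴴ := by simp only [Matrix.mul_assoc]
      _ = C * (Cᴴ * C)⁻¹ * Cᴴ := by rw [nonsing_inv_mul _ ((isUnit_iff_isUnit_det _).mp hC),
          Matrix.mul_one]
  isSelfAdjoint := by
    simp [IsSelfAdjoint, colSpaceProj, star_eq_conjTranspose, conjTranspose_nonsing_inv,
      Matrix.mul_assoc]

theorem conjTranspose_mul_one_sub_colSpaceProj [DecidableEq m] {C : Matrix m r 𝕜} (hC : IsUnit (Cᴴ * C)) :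
    Cᴴ * (1 - colSpaceProj C) = 0 := by
  rw [Matrix.mul_sub, Matrix.mul_one, colSpaceProj, ← Matrix.mul_assoc, ← Matrix.mul_assoc,
    mul_nonsing_inv _ ((isUnit_iff_isUnit_det _).mp hC), Matrix.one_mul, sub_self]

theorem norm_conjTranspose_mul_one_sub_add_mul_le [DecidableEq m] (E : Matrix m m 𝕜) {P : Matrix m m 𝕜}
    (hP : IsStarProjection P) : ‖Eᴴ * (1 - P) + E * P‖ ≤ 2 * ‖E‖ :=
  calc ‖Eᴴ * (1 - P) + E * P‖ ≤ ‖Eᴴ‖ * ‖1 - P‖ + ‖E‖ * ‖P‖ :=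
        (norm_add_le _ _).trans (add_le_add (l2_opNorm_mul _ _) (l2_opNorm_mul _ _))
    _ ≤ ‖E‖ * 1 + ‖E‖ * 1 := by
        rw [l2_opNorm_conjTranspose]
        gcongr
        exacts [hP.one_sub.norm_le, hP.norm_le]
    _ = 2 * ‖E‖ := by ring

theorem norm_sub_mul_colSpaceProj_le [DecidableEq m] {K E : Matrix m m 𝕜} {C V : Matrix m r 𝕜}
    (hK : K.IsHermitian) (hE : K = C * Vᴴ + E) (hC : IsUnit (Cᴴ * C)) :
    ‖K - C * Vᴴ * colSpaceProj C‖ ≤ 2 * ‖E‖ := by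
  set P := colSpaceProj C
  have hKQ : K * (1 - P) = Eᴴ * (1 - P) := by
    conv_lhs => rw [← hK.eq, hE, conjTranspose_add, conjTranspose_mul, conjTranspose_conjTranspose,
      Matrix.add_mul, Matrix.mul_assoc, conjTranspose_mul_one_sub_colSpaceProj hC,
      Matrix.mul_zero, zero_add]
  have hsplit : K - C * Vᴴ * P = Eᴴ * (1 - P) + E * P := by
    rw [← hKQ, show C * Vᴴ = K - E by rw [hE]; abel]
    simp only [Matrix.mul_sub, Matrix.sub_mul, Matrix.mul_one]
    abel
  rw [hsplit]
  exact norm_conjTranspose_mul_one_sub_add_mul_le E (isStarProjection_colSpaceProj hC)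

end Matrix

/-- Let `K ∈ ℝ^{n×n}` be symmetric with `K = C Vᵀ + E`, where `C` has full
column rank `k` (so `Cᵀ C` is invertible), and let `U = Vᵀ C (Cᵀ C)⁻¹`. Then
`‖K - C U Cᵀ‖ ≤ 2 ‖E‖`; in particular, if `‖E‖ ≤ p σ_{k+1}(K)` with `p ≥ 0` and singular values
`ν` of `K` in descending order (`ν i = √(λ_i(Kᴴ K))`), then `‖K - C U Cᵀ‖ ≤ 2 p σ_{k+1}(K)`. -/
theorem stmt7 {n k : ℕ} (hk : k < n)
    (K : Matrix (Fin n) (Fin n) ℝ) (hKsym : K.IsHermitian)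
    (C : Matrix (Fin n) (Fin k) ℝ) (V : Matrix (Fin n) (Fin k) ℝ)
    (E : Matrix (Fin n) (Fin n) ℝ)
    (hE : K = C * Vᵀ + E)
    (hC : C.rank = k) :
    ‖K - C * (Vᵀ * C * (Cᵀ * C)⁻¹) * Cᵀ‖ ≤ 2 * ‖E‖ ∧
    ∀ p : ℝ, 0 ≤ p →
      ∀ ν : Fin n → ℝ, Antitone ν →
        (∃ e : Equiv.Perm (Fin n), ∀ i,
          ν i = Real.sqrt ((Matrix.isHermitian_transpose_mul_self K).eigenvalues (e i))) →
        ‖E‖ ≤ p * ν ⟨k, hk⟩ →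
        ‖K - C * (Vᵀ * C * (Cᵀ * C)⁻¹) * Cᵀ‖ ≤ 2 * p * ν ⟨k, hk⟩ := by
  have hGram : IsUnit (Cᴴ * C) :=
    isUnit_conjTranspose_mul_self_of_rank_eq_card (by rw [hC, Fintype.card_fin])
  have hbound : ‖K - C * (Vᵀ * C * (Cᵀ * C)⁻¹) * Cᵀ‖ ≤ 2 * ‖E‖ := by
    simp only [← conjTranspose_eq_transpose_of_trivial] at hE ⊢
    rw [show C * (Vᴴ * C * (Cᴴ * C)⁻¹) * Cᴴ = C * Vᴴ * colSpaceProj C by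
      simp only [colSpaceProj, Matrix.mul_assoc]]
    exact norm_sub_mul_colSpaceProj_le hKsym hE hGram
  refine ⟨hbound, fun p _ ν _ _ hEp => ?_⟩
  calc ‖K - C * (Vᵀ * C * (Cᵀ * C)⁻¹) * Cᵀ‖ ≤ 2 * ‖E‖ := hbound
    _ ≤ 2 * (p * ν ⟨k, hk⟩) := by gcongr
    _ = 2 * p * ν ⟨k, hk⟩ := (mul_assoc _ _ _).symm
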